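/- The 𝔠𝔩𝔰-module M_{a,b,c} (with actions L_i _λ x = cⁱ(∂+aλ+b)x, L_i _λ y = cⁱ(∂+(a+1/2)λ+b)y, G_i _λ x = cⁱy, G_i _λ y = cⁱ(∂+2aλ+b)x) is irreducible if and only if a ≠ 0. Moreover, when a = 0, the submodule ℂ[∂](∂+b)x ⊕ ℂ[∂]y is the unique nontrivial proper submodule of M_{0,b,c}. -/

import Mathlib

/-!
Since a submodule is a subspace and `G_0 ₗ v`, `L_0 ₗ v` are polynomial in `λ`, every
`λ`-coefficient of them lies in the submodule (a functional vanishing on it turns them into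
polynomials in `λ` with infinitely many roots). Comparing degrees in `∂`, the top
`λ`-coefficients of `G_0 ₗ v` and `L_0 ₗ v` are constant vectors for `v = f x + g y`. For
`a ≠ 0` the `G_0`-coefficients give a nonzero `αx + βy` in the submodule, and the `λ`-coefficient
`2aβ x` of `G_0 ₗ (αx + βy)` then gives `x`, hence `y = G_0 ₀ x` and everything. For `a = 0` the
`G_0`- and `L_0`-coefficients give `y`, hence `(∂+b)x = G_0 ₀ y`, so the submodule contains
`ℂ[∂](∂+b)x ⊕ ℂ[∂]y`; this is the kernel of the functional `f x + g y ↦ f(-b)`, a maximal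
subspace.
-/

open Polynomial

/-- `ℂ[∂]`. -/
abbrev P := Polynomial ℂ
/-- The free `ℂ[∂]`-module `V = ℂ[∂]x ⊕ ℂ[∂]y`: the first component is the coefficient of
the even generator `x`, the second that of the odd generator `y`. -/
abbrev V := P × P

/-- Substitution `∂ ↦ ∂ + λ`. -/
noncomputable def sh (l : ℂ) (f : P) : P := f.comp (Polynomial.X + Polynomial.C l)

/-- The action of `∂` on `V`. -/
noncomputable def dV (v : V) : V := (Polynomial.X * v.1, Polynomial.X * v.2)

/-- The `λ`-action of `L_i` on `M_{a,b,c}`: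
`L_i ₗ x = cⁱ(∂+aλ+b)x`, `L_i ₗ y = cⁱ(∂+(a+1/2)λ+b)y`, extended by
`L_i ₗ (f(∂)v) = f(∂+λ) L_i ₗ v`. -/
noncomputable def LM (a b c : ℂ) (i : ℤ) (l : ℂ) (v : V) : V :=
  (Polynomial.C (c ^ i) * sh l v.1 * (Polynomial.X + Polynomial.C (a*l + b)),
   Polynomial.C (c ^ i) * sh l v.2 * (Polynomial.X + Polynomial.C ((a + 1/2)*l + b)))

/-- The `λ`-action of `G_i` on `M_{a,b,c}`:
`G_i ₗ x = cⁱ y`, `G_i ₗ y = cⁱ(∂+2aλ+b)x`. -/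
noncomputable def GM (a b c : ℂ) (i : ℤ) (l : ℂ) (v : V) : V :=
  (Polynomial.C (c ^ i) * sh l v.2 * (Polynomial.X + Polynomial.C (2*a*l + b)),
   Polynomial.C (c ^ i) * sh l v.1)

/-- The `λ`-action of `L_i` on `M'_{a,b,c}`:
`L_i ₗ x = cⁱ(∂+aλ+b)x`, `L_i ₗ y = cⁱ(∂+(a−1/2)λ+b)y`. -/
noncomputable def LM' (a b c : ℂ) (i : ℤ) (l : ℂ) (v : V) : V :=
  (Polynomial.C (c ^ i) * sh l v.1 * (Polynomial.X + Polynomial.C (a*l + b)),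
   Polynomial.C (c ^ i) * sh l v.2 * (Polynomial.X + Polynomial.C ((a - 1/2)*l + b)))

/-- The `λ`-action of `G_i` on `M'_{a,b,c}`:
`G_i ₗ x = cⁱ(∂+(2a−1)λ+b)y`, `G_i ₗ y = cⁱ x`. -/
noncomputable def GM' (a b c : ℂ) (i : ℤ) (l : ℂ) (v : V) : V :=
  (Polynomial.C (c ^ i) * sh l v.2,
   Polynomial.C (c ^ i) * sh l v.1 * (Polynomial.X + Polynomial.C ((2*a - 1)*l + b)))

/-- `S` is a `𝔠𝔩𝔰`-submodule of `M_{a,b,c}`: a `ℂ`-subspace closed under `∂` and under all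
`λ`-actions of the `L_i` and `G_i`. -/
def IsSubM (a b c : ℂ) (S : Submodule ℂ V) : Prop :=
  (∀ v ∈ S, dV v ∈ S) ∧
  ∀ (i : ℤ) (l : ℂ), ∀ v ∈ S, LM a b c i l v ∈ S ∧ GM a b c i l v ∈ S

/-- The candidate submodule `ℂ[∂](∂+b)x ⊕ ℂ[∂]y` of `M_{0,b,c}`. -/
noncomputable def NM (b : ℂ) : Submodule ℂ V :=
  Submodule.comap (LinearMap.fst ℂ P P)
    ((Ideal.span {Polynomial.X + Polynomial.C b}).restrictScalars ℂ)

theorem Submodule.mem_of_forall_sum_pow_smul_mem {K M : Type*} [Field K] [Infinite K]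
    [AddCommGroup M] [Module K M] {S : Submodule K M} {n : ℕ} {w : ℕ → M}
    (h : ∀ l : K, ∑ j ∈ Finset.range n, l ^ j • w j ∈ S) {k : ℕ} (hk : k < n) : w k ∈ S := by
  rw [← Submodule.Quotient.mk_eq_zero]
  refine (Module.forall_dual_apply_eq_zero_iff K _).mp fun φ => ?_
  set p : K[X] := ∑ j ∈ Finset.range n, C (φ (S.mkQ (w j))) * X ^ j
  have hp : p = 0 := Polynomial.funext fun l => by
    calc p.eval l = φ (S.mkQ (∑ j ∈ Finset.range n, l ^ j • w j)) := by
          simp only [p, eval_finsetSum, eval_mul, eval_C, eval_pow, eval_X, map_sum, map_smul,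
            smul_eq_mul, mul_comm]
      _ = eval l 0 := by
          rw [Submodule.mkQ_apply, (Submodule.Quotient.mk_eq_zero S).mpr (h l), map_zero, eval_zero]
  simpa [p, finsetSum_coeff, coeff_C_mul_X_pow, hk] using congrArg (coeff · k) hp

theorem Submodule.pair_coeff_mem_of_forall_pair_eval_mem {K A : Type*} [Field K] [Infinite K]
    [CommRing A] [Algebra K A] {S : Submodule K (A × A)} {F G : A[X]}
    (h : ∀ l : K, (F.eval (algebraMap K A l), G.eval (algebraMap K A l)) ∈ S) (j : ℕ) :
    (F.coeff j, G.coeff j) ∈ S := by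
  set n := F.natDegree + G.natDegree + j + 1
  have eval_eq (H : A[X]) (hH : H.natDegree < n) (l : K) :
      H.eval (algebraMap K A l) = ∑ i ∈ Finset.range n, l ^ i • H.coeff i := by
    simp [eval_eq_sum_range' hH, Algebra.smul_def, mul_comm]
  refine Submodule.mem_of_forall_sum_pow_smul_mem (w := fun i => (F.coeff i, G.coeff i))
    (fun l => ?_) (by omega : j < n)
  convert h l using 1
  ext
  · simp [Prod.fst_sum, eval_eq F (by omega)]
  · simp [Prod.snd_sum, eval_eq G (by omega)]

/-- `p(∂ + λ)` as a polynomial in `λ` over `ℂ[∂]`. -/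
noncomputable def shiftPoly (p : P) : P[X] := (p.map C).comp (X + C X)

/-- `∂ + eλ + b` as a polynomial in `λ` over `ℂ[∂]`. -/
noncomputable def linPoly (e b : ℂ) : P[X] := C (X + C b) + X * C (C e)

theorem eval_shiftPoly (p : P) (l : ℂ) : (shiftPoly p).eval (C l) = sh l p := by
  rw [shiftPoly, eval_comp, eval_map, sh, comp, eval_add, eval_X, eval_C, add_comm]

theorem eval_linPoly (e b l : ℂ) : (linPoly e b).eval (C l) = X + C (e * l + b) := by
  simp only [linPoly, eval_add, eval_mul, eval_C, eval_X, C_add, C_mul]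
  ring

theorem natDegree_shiftPoly (p : P) : (shiftPoly p).natDegree = p.natDegree := by
  rw [shiftPoly, natDegree_comp, natDegree_map_eq_of_injective C_injective, natDegree_X_add_C,
    mul_one]

theorem coeff_shiftPoly_of_natDegree_le {p : P} {j : ℕ} (h : p.natDegree ≤ j) :
    (shiftPoly p).coeff j = C (p.coeff j) := by
  rcases h.eq_or_lt with rfl | hlt
  · rw [coeff_natDegree, ← natDegree_shiftPoly, coeff_natDegree, shiftPoly,
      leadingCoeff_comp (by rw [natDegree_X_add_C]; exact one_ne_zero),
      leadingCoeff_map_of_injective C_injective, leadingCoeff_X_add_C, one_pow, mul_one]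
  · rw [coeff_eq_zero_of_natDegree_lt hlt, coeff_eq_zero_of_natDegree_lt
      ((natDegree_shiftPoly p).trans_lt hlt), C_0]

theorem coeff_shiftPoly_mul_linPoly_succ {p : P} {k : ℕ} (h : p.natDegree ≤ k) (e b : ℂ) :
    (shiftPoly p * linPoly e b).coeff (k + 1) = C (e * p.coeff k) := by
  rw [linPoly, mul_add, ← mul_assoc, coeff_add, coeff_mul_C, coeff_mul_C, coeff_mul_X,
    coeff_shiftPoly_of_natDegree_le h, coeff_shiftPoly_of_natDegree_le (h.trans k.le_succ),
    coeff_eq_zero_of_natDegree_lt (Nat.lt_succ_of_le h), C_0, zero_mul, zero_add, C_mul, mul_comm]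

theorem GM_zero_eq_eval (a b c l : ℂ) (f g : P) :
    GM a b c 0 l (f, g) =
      ((shiftPoly g * linPoly (2 * a) b).eval (C l), (shiftPoly f).eval (C l)) := by
  simp [GM, eval_shiftPoly, eval_linPoly]

theorem LM_zero_eq_eval (a b c l : ℂ) (f g : P) :
    LM a b c 0 l (f, g) =
      ((shiftPoly f * linPoly a b).eval (C l),
        (shiftPoly g * linPoly (a + 1 / 2) b).eval (C l)) := by
  simp [LM, eval_shiftPoly, eval_linPoly]

theorem GM_zero_zero (a b c : ℂ) (f g : P) : GM a b c 0 0 (f, g) = (g * (X + C b), f) := by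
  simp [GM, sh]

theorem one_zero_mem_of_C_zero_mem {S : Submodule ℂ V} {α : ℂ} (hα : α ≠ 0)
    (h : ((C α, 0) : V) ∈ S) : ((1, 0) : V) ∈ S := by
  have : ((C α, 0) : V) = α • ((1, 0) : V) := by refine Prod.ext ?_ ?_ <;> simp [smul_eq_C_mul]
  rwa [this, Submodule.smul_mem_iff _ hα] at h

theorem zero_one_mem_of_zero_C_mem {S : Submodule ℂ V} {β : ℂ} (hβ : β ≠ 0)
    (h : ((0, C β) : V) ∈ S) : ((0, 1) : V) ∈ S := by
  have : ((0, C β) : V) = β • ((0, 1) : V) := by refine Prod.ext ?_ ?_ <;> simp [smul_eq_C_mul]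
  rwa [this, Submodule.smul_mem_iff _ hβ] at h

namespace IsSubM

variable {a b c : ℂ} {S : Submodule ℂ V}

theorem smul_mem (hS : IsSubM a b c S) (q : P) {v : V} (hv : v ∈ S) : q • v ∈ S := by
  induction q using Polynomial.induction_on with
  | C r =>
    have : (C r : P) • v = r • v := by ext <;> simp [smul_eq_C_mul]
    exact this ▸ S.smul_mem r hv
  | add p q hp hq => exact add_smul p q v ▸ S.add_mem hp hq
  | monomial n r ih =>
    have : (C r * X ^ (n + 1) : P) • v = dV ((C r * X ^ n : P) • v) := by
      refine Prod.ext ?_ ?_ <;> simp only [dV, Prod.smul_fst, Prod.smul_snd, smul_eq_mul] <;> ring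
    exact this ▸ hS.1 _ ih

theorem eq_top_of_generators_mem (hS : IsSubM a b c S) (hx : ((1, 0) : V) ∈ S)
    (hy : ((0, 1) : V) ∈ S) : S = ⊤ := by
  refine eq_top_iff.mpr fun v _ => ?_
  have : v = v.1 • ((1, 0) : V) + v.2 • ((0, 1) : V) := by ext <;> simp
  exact this ▸ S.add_mem (hS.smul_mem _ hx) (hS.smul_mem _ hy)

theorem eq_top_of_one_zero_mem (hS : IsSubM a b c S) (hx : ((1, 0) : V) ∈ S) : S = ⊤ := by
  refine hS.eq_top_of_generators_mem hx ?_
  simpa [GM_zero_zero] using (hS.2 0 0 _ hx).2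

theorem coeff_GM_mem (hS : IsSubM a b c S) {f g : P} (hv : (f, g) ∈ S) (j : ℕ) :
    ((shiftPoly g * linPoly (2 * a) b).coeff j, (shiftPoly f).coeff j) ∈ S :=
  Submodule.pair_coeff_mem_of_forall_pair_eval_mem
    (fun l => GM_zero_eq_eval a b c l f g ▸ (hS.2 0 l _ hv).2) j

theorem coeff_LM_mem (hS : IsSubM a b c S) {f g : P} (hv : (f, g) ∈ S) (j : ℕ) :
    ((shiftPoly f * linPoly a b).coeff j, (shiftPoly g * linPoly (a + 1 / 2) b).coeff j) ∈ S :=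
  Submodule.pair_coeff_mem_of_forall_pair_eval_mem
    (fun l => LM_zero_eq_eval a b c l f g ▸ (hS.2 0 l _ hv).1) j

theorem exists_mem_snd_ne_zero (hS : IsSubM a b c S) (hne : S ≠ ⊥) :
    ∃ f g : P, g ≠ 0 ∧ (f, g) ∈ S := by
  obtain ⟨⟨f, g⟩, hv, hv0⟩ := (Submodule.ne_bot_iff S).mp hne
  by_cases hg : g = 0
  · subst hg
    refine ⟨0, f, fun hf => hv0 (by rw [hf]; rfl), ?_⟩
    simpa [GM_zero_zero] using (hS.2 0 0 _ hv).2
  · exact ⟨f, g, hg, hv⟩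

theorem one_zero_mem_of_C_C_mem (hS : IsSubM a b c S) (ha : a ≠ 0) {α β : ℂ}
    (hαβ : α ≠ 0 ∨ β ≠ 0) (h : ((C α, C β) : V) ∈ S) : ((1, 0) : V) ∈ S := by
  by_cases hβ : β = 0
  · subst hβ
    rw [C_0] at h
    exact one_zero_mem_of_C_zero_mem (hαβ.resolve_right (not_not.mpr rfl)) h
  · have := hS.coeff_GM_mem h 1
    rw [coeff_shiftPoly_mul_linPoly_succ (natDegree_C β).le,
      coeff_shiftPoly_of_natDegree_le ((natDegree_C α).trans_le zero_le_one)] at this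
    simp only [coeff_C, one_ne_zero, if_false, C_0] at this
    exact one_zero_mem_of_C_zero_mem (mul_ne_zero (mul_ne_zero two_ne_zero ha) hβ) this

theorem eq_top_of_ne_bot (hS : IsSubM a b c S) (ha : a ≠ 0) (hne : S ≠ ⊥) : S = ⊤ := by
  obtain ⟨f, g, hg, hv⟩ := hS.exists_mem_snd_ne_zero hne
  refine hS.eq_top_of_one_zero_mem ?_
  rcases lt_or_ge g.natDegree f.natDegree with hlt | hle
  · obtain ⟨k, hk⟩ := Nat.exists_eq_add_one.mpr (g.natDegree.zero_le.trans_lt hlt)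
    have := hS.coeff_GM_mem hv (k + 1)
    rw [coeff_shiftPoly_mul_linPoly_succ (by omega), coeff_shiftPoly_of_natDegree_le hk.le, ← hk,
      coeff_natDegree] at this
    refine hS.one_zero_mem_of_C_C_mem ha (Or.inr ?_) this
    exact leadingCoeff_ne_zero.mpr (by rintro rfl; simp at hk)
  · have := hS.coeff_GM_mem hv (g.natDegree + 1)
    rw [coeff_shiftPoly_mul_linPoly_succ le_rfl, coeff_shiftPoly_of_natDegree_le (by omega),
      coeff_natDegree] at this
    refine hS.one_zero_mem_of_C_C_mem ha (Or.inl ?_) this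
    exact mul_ne_zero (mul_ne_zero two_ne_zero ha) (leadingCoeff_ne_zero.mpr hg)

theorem zero_one_mem_of_ne_bot (hS : IsSubM 0 b c S) (hne : S ≠ ⊥) : ((0, 1) : V) ∈ S := by
  obtain ⟨f, g, hg, hv⟩ := hS.exists_mem_snd_ne_zero hne
  rcases lt_or_ge g.natDegree f.natDegree with hlt | hle
  · obtain ⟨k, hk⟩ := Nat.exists_eq_add_one.mpr (g.natDegree.zero_le.trans_lt hlt)
    have := hS.coeff_GM_mem hv (k + 1)
    rw [coeff_shiftPoly_mul_linPoly_succ (by omega), coeff_shiftPoly_of_natDegree_le hk.le, ← hk,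
      coeff_natDegree, mul_zero, zero_mul, C_0] at this
    exact zero_one_mem_of_zero_C_mem (leadingCoeff_ne_zero.mpr (by rintro rfl; simp at hk)) this
  · have := hS.coeff_LM_mem hv (g.natDegree + 1)
    rw [coeff_shiftPoly_mul_linPoly_succ hle, coeff_shiftPoly_mul_linPoly_succ le_rfl,
      coeff_natDegree, zero_mul, C_0] at this
    exact zero_one_mem_of_zero_C_mem (by simpa using leadingCoeff_ne_zero.mpr hg) this

end IsSubM

theorem mem_NM_iff (b : ℂ) (v : V) : v ∈ NM b ↔ X + C b ∣ v.1 := by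
  simp [NM, Ideal.mem_span_singleton]

theorem NM_eq_ker (b : ℂ) : NM b = LinearMap.ker ((leval (-b)).comp (LinearMap.fst ℂ P P)) := by
  ext v
  rw [mem_NM_iff, show X + C b = X - C (-b) by simp, dvd_iff_isRoot]
  rfl

theorem isCoatom_NM (b : ℂ) : IsCoatom (NM b) :=
  NM_eq_ker b ▸ LinearMap.isCoatom_ker_of_surjective fun r => ⟨(C r, 0), by simp⟩

theorem NM_ne_bot (b : ℂ) : NM b ≠ ⊥ :=
  (Submodule.ne_bot_iff _).mpr ⟨(0, 1), (mem_NM_iff b _).mpr (dvd_zero _), by simp⟩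

theorem isSubM_NM (b c : ℂ) : IsSubM 0 b c (NM b) := by
  refine ⟨fun v hv => ?_, fun i l v _ => ⟨?_, ?_⟩⟩ <;> rw [mem_NM_iff] at *
  · exact hv.mul_left X
  · simp [LM]
  · simp [GM]

theorem IsSubM.NM_le {b c : ℂ} {S : Submodule ℂ V} (hS : IsSubM 0 b c S)
    (hy : ((0, 1) : V) ∈ S) : NM b ≤ S := by
  have hx : ((X + C b, 0) : V) ∈ S := by simpa [GM_zero_zero] using (hS.2 0 0 _ hy).2
  intro v hv
  obtain ⟨q, hq⟩ := (mem_NM_iff b v).mp hv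
  have : v = q • ((X + C b, 0) : V) + v.2 • ((0, 1) : V) :=
    Prod.ext (by simp [hq, mul_comm]) (by simp)
  exact this ▸ S.add_mem (hS.smul_mem q hx) (hS.smul_mem _ hy)

theorem stmt10_general (a b c : ℂ) :
    ((∀ S : Submodule ℂ V, IsSubM a b c S → S = ⊥ ∨ S = ⊤) ↔ a ≠ 0)
    ∧ (a = 0 →
        IsSubM 0 b c (NM b) ∧ NM b ≠ ⊥ ∧ NM b ≠ ⊤ ∧
        ∀ S : Submodule ℂ V, IsSubM 0 b c S → S ≠ ⊥ → S ≠ ⊤ → S = NM b) := by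
  refine ⟨⟨fun hirr ha => ?_, fun ha S hS => or_iff_not_imp_left.mpr (hS.eq_top_of_ne_bot ha)⟩,
    fun ha => ?_⟩ <;> subst ha
  · rcases hirr _ (isSubM_NM b c) with h | h
    exacts [NM_ne_bot b h, (isCoatom_NM b).1 h]
  · refine ⟨isSubM_NM b c, NM_ne_bot b, (isCoatom_NM b).1, fun S hS hbot htop => ?_⟩
    have := (isCoatom_NM b).le_iff.mp (hS.NM_le (hS.zero_one_mem_of_ne_bot hbot))
    exact this.resolve_left htop

/-- `M_{a,b,c}` is irreducible iff `a ≠ 0`; and when `a = 0`,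
`ℂ[∂](∂+b)x ⊕ ℂ[∂]y` is the unique nontrivial proper submodule of `M_{0,b,c}`. -/
theorem stmt10 (a b c : ℂ) (hc : c ≠ 0) :
    ((∀ S : Submodule ℂ V, IsSubM a b c S → S = ⊥ ∨ S = ⊤) ↔ a ≠ 0)
    ∧ (a = 0 →
        IsSubM 0 b c (NM b) ∧ NM b ≠ ⊥ ∧ NM b ≠ ⊤ ∧
        ∀ S : Submodule ℂ V, IsSubM 0 b c S → S ≠ ⊥ → S ≠ ⊤ → S = NM b) :=
  stmt10_general a b c
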